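/- For any set X and probability densities p, q, p* on X, E_{x∼p*}[τ²(p(x)/q(x))] ≤ 3√2·(H²(p*,p) + H²(p*,q)), where τ(z) = (√(1/z)−1)/(√(1/z)+1). -/
import Mathlib


lemma poly_key (a b c : ℝ) (hb : 0 < b) (hc : 0 < c) :
    a^2 * (c - b)^2 ≤ ((a - b)^2 + (a - c)^2) * (b + c)^2 := by
  have h1 : 0 < 2*(b+c)^2 - (c-b)^2 := by nlinarith [mul_pos hb hc]
  nlinarith [sq_nonneg ((2*(b+c)^2 - (c-b)^2)*a - (b+c)^3),
    mul_nonneg (mul_nonneg (sq_nonneg (c-b)) (mul_pos hb hc).le) (sq_nonneg (b+c)), h1]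

/-- The rho-estimator link function `τ(z) = (√(1/z) − 1)/(√(1/z) + 1)`. -/
noncomputable def tauFn (z : ℝ) : ℝ :=
  (Real.sqrt (1 / z) - 1) / (Real.sqrt (1 / z) + 1)

/-- Squared Hellinger distance between densities on a finite set. -/
noncomputable def hellSq {X : Type} [Fintype X] (p q : X → ℝ) : ℝ :=
  ∑ x, (Real.sqrt (p x) - Real.sqrt (q x)) ^ 2

/-- Second moment bound for the rho-estimator loss: for densities `p, q, p⋆` on `X`,
`E_{x∼p⋆}[τ²(p(x)/q(x))] ≤ 3√2·(H²(p⋆,p) + H²(p⋆,q))`. -/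
theorem tau_sq_expectation_bound {X : Type} [Fintype X] (p q pstar : X → ℝ)
    (hp0 : ∀ x, 0 < p x) (hq0 : ∀ x, 0 < q x) (hps0 : ∀ x, 0 ≤ pstar x)
    (hp1 : (∑ x, p x) = 1) (hq1 : (∑ x, q x) = 1) (hps1 : (∑ x, pstar x) = 1) :
    (∑ x, pstar x * tauFn (p x / q x) ^ 2) ≤
      3 * Real.sqrt 2 * (hellSq pstar p + hellSq pstar q) := by
  have key : ∀ x, pstar x * tauFn (p x / q x) ^ 2 ≤
      (Real.sqrt (pstar x) - Real.sqrt (p x)) ^ 2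
        + (Real.sqrt (pstar x) - Real.sqrt (q x)) ^ 2 := by
    intro x
    set a := Real.sqrt (pstar x)
    set b := Real.sqrt (p x) with hbdef
    set c := Real.sqrt (q x) with hcdef
    have hb : 0 < b := Real.sqrt_pos.mpr (hp0 x)
    have hc : 0 < c := Real.sqrt_pos.mpr (hq0 x)
    have hps : pstar x = a ^ 2 := (Real.sq_sqrt (hps0 x)).symm
    have htau : tauFn (p x / q x) = (c - b) / (c + b) := by
      unfold tauFn
      have h1 : 1 / (p x / q x) = q x / p x := by
        field_simp
      rw [h1, Real.sqrt_div (hq0 x).le, ← hbdef, ← hcdef]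
      field_simp
    rw [hps, htau, div_pow, ← mul_div_assoc, div_le_iff₀ (by positivity)]
    have := poly_key a b c hb hc
    calc a ^ 2 * (c - b) ^ 2 ≤ ((a - b)^2 + (a - c)^2) * (b + c)^2 := this
      _ = ((a - b)^2 + (a - c)^2) * (c + b)^2 := by ring
  have hsum : (∑ x, pstar x * tauFn (p x / q x) ^ 2) ≤
      hellSq pstar p + hellSq pstar q := by
    rw [hellSq, hellSq, ← Finset.sum_add_distrib]
    exact Finset.sum_le_sum fun x _ => key x
  have hH : 0 ≤ hellSq pstar p + hellSq pstar q := by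
    apply add_nonneg <;> exact Finset.sum_nonneg fun x _ => sq_nonneg _
  have h2 : (1 : ℝ) ≤ Real.sqrt 2 := by
    rw [show (1:ℝ) = Real.sqrt 1 by simp]
    exact Real.sqrt_le_sqrt (by norm_num)
  nlinarith [hsum, hH, h2]
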